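/- arXiv:1703.02834 — 2 statements merged into one kernel-verified Lean document; each statement's English description precedes it below -/
import Mathlib

section
/- If u ~ Gamma(s,1) and x ~ N(0,Σ) in R^p are independent, with s>0 and Σ positive semidefinite, then the characteristic function of √u·x equals (1 + (1/2)uᵀΣu)^{-s} for all u in R^p; i.e., √u·x follows a symmetric multivariate generalized Laplace distribution GAL_p(Σ,0,s). -/
/-!
Conditionally on `u`, the vector `√u • x` is centred Gaussian with covariance `u Σ`, so its
characteristic function at `t` is `E[exp(-u tᵀΣt / 2)]`: the Laplace transform of `Gamma(s, 1)`
at `tᵀΣt / 2 ≥ 0`, which is `(1 + tᵀΣt / 2)^(-s)`.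
-/

open MeasureTheory ProbabilityTheory Matrix
open scoped RealInnerProductSpace

/-- Characteristic function of a measure on a real inner product space. -/
noncomputable def charFn {E : Type*} [NormedAddCommGroup E] [InnerProductSpace ℝ E]
    [MeasurableSpace E] (m : Measure E) (t : E) : ℂ :=
  ∫ x, Complex.exp (((inner ℝ t x : ℝ) : ℂ) * Complex.I) ∂m

/-- The quadratic form `uᵀ S u`. -/
noncomputable def quadForm {p : ℕ} (S : Matrix (Fin p) (Fin p) ℝ)
    (u : EuclideanSpace ℝ (Fin p)) : ℝ :=
  ∑ i, ∑ j, u i * S i j * u j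

/-- The characteristic function of the generalized asymmetric Laplace distribution
`GAL_p(S, μ, s)`: `u ↦ (1 + (1/2) uᵀ S u - i μᵀ u)^(-s)`. -/
noncomputable def galCF {p : ℕ} (S : Matrix (Fin p) (Fin p) ℝ)
    (μv : EuclideanSpace ℝ (Fin p)) (s : ℝ) (u : EuclideanSpace ℝ (Fin p)) : ℂ :=
  (1 + (1/2 : ℂ) * ((quadForm S u : ℝ) : ℂ)
      - Complex.I * ((∑ i, μv i * u i : ℝ) : ℂ)) ^ (-(s : ℂ))

/-- A measure on `ℝ^p` is the `GAL_p(S, μ, s)` distribution iff it is a probability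
measure with the prescribed characteristic function. -/
def IsGAL {p : ℕ} (S : Matrix (Fin p) (Fin p) ℝ) (μv : EuclideanSpace ℝ (Fin p))
    (s : ℝ) (m : Measure (EuclideanSpace ℝ (Fin p))) : Prop :=
  IsProbabilityMeasure m ∧ ∀ u, charFn m u = galCF S μv s u

/-- A measure on `ℝ^p` is the centered Gaussian `N(0, S)` iff it is a probability
measure with characteristic function `u ↦ exp(-(1/2) uᵀ S u)`. -/
def IsGaussian0 {p : ℕ} (S : Matrix (Fin p) (Fin p) ℝ)
    (m : Measure (EuclideanSpace ℝ (Fin p))) : Prop :=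
  IsProbabilityMeasure m ∧
    ∀ u, charFn m u = Complex.exp (-(1/2 : ℂ) * ((quadForm S u : ℝ) : ℂ))

open Real Set

lemma quadForm_smul {p : ℕ} (S : Matrix (Fin p) (Fin p) ℝ) (a : ℝ)
    (t : EuclideanSpace ℝ (Fin p)) : quadForm S (a • t) = a ^ 2 * quadForm S t := by
  simp only [quadForm, Finset.mul_sum, PiLp.smul_apply, smul_eq_mul]
  exact Finset.sum_congr rfl fun i _ => Finset.sum_congr rfl fun j _ => by ring

lemma quadForm_nonneg {p : ℕ} {S : Matrix (Fin p) (Fin p) ℝ} (hS : S.PosSemidef)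
    (t : EuclideanSpace ℝ (Fin p)) : 0 ≤ quadForm S t := by
  refine (hS.dotProduct_mulVec_nonneg (fun i => t i)).trans_eq ?_
  simp only [star_trivial, quadForm, dotProduct, mulVec, Finset.mul_sum]
  exact Finset.sum_congr rfl fun i _ => Finset.sum_congr rfl fun j _ => by ring

lemma ae_nonneg_gammaMeasure (a r : ℝ) : ∀ᵐ v ∂gammaMeasure a r, 0 ≤ v := by
  simp only [ae_iff, not_le]
  rw [show {v : ℝ | v < 0} = Iio 0 from rfl, gammaMeasure, withDensity_apply _ measurableSet_Iio]
  exact lintegral_gammaPDF_of_nonpos le_rfl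

lemma integral_gammaMeasure {a r : ℝ} (ha : 0 < a) (hr : 0 < r) (f : ℝ → ℝ) :
    ∫ v, f v ∂gammaMeasure a r
      = ∫ v in Ioi 0, r ^ a / Gamma a * v ^ (a - 1) * exp (-(r * v)) * f v := by
  rw [gammaMeasure, show gammaPDF a r = fun v => ENNReal.ofReal (gammaPDFReal a r v) from rfl,
    integral_withDensity_eq_integral_toReal_smul (measurable_gammaPDFReal a r).ennreal_ofReal
      (ae_of_all _ fun _ => ENNReal.ofReal_lt_top), ← integral_Ici_eq_integral_Ioi,
    ← integral_indicator measurableSet_Ici]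
  congr 1 with v
  rw [ENNReal.toReal_ofReal (gammaPDFReal_nonneg ha hr v)]
  simp only [gammaPDFReal, indicator, mem_Ici, smul_eq_mul]
  split_ifs <;> simp

lemma integral_exp_neg_mul_gammaMeasure {a r c : ℝ} (ha : 0 < a) (hr : 0 < r) (hc : -r < c) :
    ∫ v, exp (-(c * v)) ∂gammaMeasure a r = (1 + c / r) ^ (-a) := by
  have hrc : 0 < r + c := by linarith
  have key : ∀ v, r ^ a / Gamma a * v ^ (a - 1) * exp (-(r * v)) * exp (-(c * v))
      = r ^ a / Gamma a * (v ^ (a - 1) * exp (-((r + c) * v))) := fun v => by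
    rw [add_mul, neg_add, exp_add]; ring
  simp only [integral_gammaMeasure ha hr, key, integral_const_mul,
    integral_rpow_mul_exp_neg_mul_Ioi ha hrc]
  rw [show 1 + c / r = (r + c) / r by field_simp, rpow_neg (by positivity),
    ← inv_rpow (by positivity), inv_div, div_rpow hr.le hrc.le, one_div, inv_rpow hrc.le]
  field_simp [(Gamma_pos_of_pos ha).ne']

lemma charFn_map_smul_of_indepFun {Ω E : Type*} [MeasurableSpace Ω] {P : Measure Ω}
    [IsFiniteMeasure P] [NormedAddCommGroup E] [InnerProductSpace ℝ E] [MeasurableSpace E]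
    [BorelSpace E] [SecondCountableTopology E] {U : Ω → ℝ} {X : Ω → E}
    (hU : Measurable U) (hX : Measurable X) (hind : IndepFun U X P) {g : ℝ → ℝ}
    (hg : Measurable g) (t : E) :
    charFn (P.map fun ω => g (U ω) • X ω) t
      = ∫ v, charFn (P.map X) (g v • t) ∂P.map U := by
  set F : ℝ × E → ℂ := fun z => Complex.exp ((g z.1 * ⟪t, z.2⟫ : ℝ) * Complex.I)
  have hF : Measurable F := by fun_prop
  have hF_int : Integrable F ((P.map U).prod (P.map X)) :=
    (integrable_const (1 : ℝ)).mono' hF.aestronglyMeasurable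
      (ae_of_all _ fun z => (Complex.norm_exp_ofReal_mul_I _).le)
  have hlaw : P.map (fun ω => (U ω, X ω)) = (P.map U).prod (P.map X) :=
    (indepFun_iff_map_prod_eq_prod_map_map hU.aemeasurable hX.aemeasurable).mp hind
  calc charFn (P.map fun ω => g (U ω) • X ω) t
      = ∫ ω, F (U ω, X ω) ∂P := by
        rw [charFn, integral_map (by fun_prop) (by fun_prop)]
        simp only [F, real_inner_smul_right]
    _ = ∫ z, F z ∂(P.map U).prod (P.map X) := by
        rw [← hlaw, integral_map (by fun_prop) hF.aestronglyMeasurable]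
    _ = ∫ v, charFn (P.map X) (g v • t) ∂P.map U := by
        rw [integral_prod F hF_int]
        simp only [F, charFn, real_inner_smul_left]

/-- If `u ~ Gamma(s,1)` and `x ~ N(0,Σ)` are independent, `s > 0`, `Σ` PSD, then
`√u · x` has the `GAL_p(Σ, 0, s)` characteristic function. -/
theorem stmt0 {Ω : Type*} [MeasureSpace Ω] [IsProbabilityMeasure (ℙ : Measure Ω)]
    {p : ℕ} (S : Matrix (Fin p) (Fin p) ℝ) (s : ℝ) (hs : 0 < s) (hS : S.PosSemidef)
    (u : Ω → ℝ) (x : Ω → EuclideanSpace ℝ (Fin p))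
    (hu : Measurable u) (hx : Measurable x)
    (hulaw : Measure.map u ℙ = gammaMeasure s 1)
    (hxlaw : IsGaussian0 S (Measure.map x ℙ))
    (hind : IndepFun u x ℙ) :
    ∀ t, charFn (Measure.map (fun ω => Real.sqrt (u ω) • x ω) ℙ) t = galCF S 0 s t := by
  intro t
  have hq : 0 ≤ quadForm S t := quadForm_nonneg hS t
  have hcharFn : ∀ᵐ v ∂gammaMeasure s 1, charFn (Measure.map x ℙ) (√v • t)
      = ((exp (-(quadForm S t / 2 * v)) : ℝ) : ℂ) := by
    filter_upwards [ae_nonneg_gammaMeasure s 1] with v hv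
    rw [hxlaw.2, quadForm_smul, sq_sqrt hv, Complex.ofReal_exp]
    push_cast
    ring_nf
  rw [charFn_map_smul_of_indepFun hu hx hind continuous_sqrt.measurable, hulaw,
    integral_congr_ae hcharFn, integral_complex_ofReal,
    integral_exp_neg_mul_gammaMeasure hs one_pos (by linarith),
    Complex.ofReal_cpow (by positivity), galCF]
  simp only [PiLp.zero_apply, zero_mul, Finset.sum_const_zero]
  push_cast
  ring_nf
end

section
/- Let y ~ N(0,1) and w ~ N(0, φ⁻¹ I_p) be independent, φ>0. Then the random vector ξ = y·w follows the symmetric generalized Laplace distribution GAL_p(2φ⁻¹ I_p, 0, 1/2). -/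
open MeasureTheory ProbabilityTheory Matrix
open scoped RealInnerProductSpace

open scoped Real

/-!
Conditionally on `y = a`, the vector `y • w` is `N(0, a² φ⁻¹ I)`, so its characteristic function
at `u` is `exp (-a² c / 2)` with `c = φ⁻¹ ‖u‖²`. Averaging over `y ~ N(0,1)` (Fubini, using
independence) gives the Gaussian integral `∫ exp (-(1 + c) a² / 2) dN(0,1)(a) = (1 + c)^(-1/2)`,
which is the `GAL_p(2 φ⁻¹ I, 0, 1/2)` characteristic function.
-/

lemma quadForm_smul_one {p : ℕ} (r : ℝ) (u : EuclideanSpace ℝ (Fin p)) :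
    quadForm (r • (1 : Matrix (Fin p) (Fin p) ℝ)) u = r * ‖u‖ ^ 2 := by
  rw [EuclideanSpace.real_norm_sq_eq, quadForm, Finset.mul_sum]
  refine Finset.sum_congr rfl fun i _ => ?_
  rw [Finset.sum_eq_single i (fun j _ hj => by simp [Matrix.one_apply_ne' hj]) (by simp)]
  simp only [Matrix.smul_apply, one_apply_eq, smul_eq_mul]
  ring

lemma galCF_two_mul_smul_one_zero {p : ℕ} (r s : ℝ) (u : EuclideanSpace ℝ (Fin p)) :
    galCF ((2 * r) • (1 : Matrix (Fin p) (Fin p) ℝ)) 0 s u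
      = ((1 + r * ‖u‖ ^ 2 : ℝ) : ℂ) ^ (-(s : ℂ)) := by
  simp only [galCF, quadForm_smul_one, PiLp.zero_apply, zero_mul, Finset.sum_const_zero]
  push_cast
  ring_nf

lemma IsGaussian0.charFn_eq {p : ℕ} {r : ℝ} {m : Measure (EuclideanSpace ℝ (Fin p))}
    (hm : IsGaussian0 (r • (1 : Matrix (Fin p) (Fin p) ℝ)) m) (u : EuclideanSpace ℝ (Fin p)) :
    charFn m u = ((Real.exp (-(r * ‖u‖ ^ 2) / 2) : ℝ) : ℂ) := by
  rw [hm.2, quadForm_smul_one, Complex.ofReal_exp]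
  push_cast
  ring_nf

lemma charFn_map_smul_eq_integral {Ω E : Type*} [MeasurableSpace Ω] {μ : Measure Ω}
    [IsFiniteMeasure μ] [NormedAddCommGroup E] [InnerProductSpace ℝ E] [MeasurableSpace E]
    [BorelSpace E] {y : Ω → ℝ} {w : Ω → E} (hy : Measurable y) (hw : Measurable w)
    (hind : IndepFun y w μ) (u : E) :
    charFn (Measure.map (fun ω => y ω • w ω) μ) u
      = ∫ a, charFn (Measure.map w μ) (a • u) ∂(Measure.map y μ) := by
  set F : ℝ × E → ℂ := fun z => Complex.exp (((⟪u, z.1 • z.2⟫ : ℝ) : ℂ) * Complex.I)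
  have hF : Continuous F := by fun_prop
  have hlaw : Measure.map (fun ω => (y ω, w ω)) μ = (μ.map y).prod (μ.map w) :=
    (indepFun_iff_map_prod_eq_prod_map_map hy.aemeasurable hw.aemeasurable).mp hind
  have hFint : Integrable F ((μ.map y).prod (μ.map w)) :=
    (integrable_const (1 : ℝ)).mono' hF.aestronglyMeasurable
      (.of_forall fun z => (Complex.norm_exp_ofReal_mul_I _).le)
  have hsmul : (fun ω => y ω • w ω) = (fun z : ℝ × E => z.1 • z.2) ∘ fun ω => (y ω, w ω) := rfl
  rw [charFn, hsmul, ← Measure.map_map (by fun_prop) (hy.prodMk hw), hlaw,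
    integral_map (by fun_prop) (by fun_prop), integral_prod F hFint]
  simp only [F, charFn, real_inner_smul_right, real_inner_smul_left]

lemma integral_exp_neg_mul_sq_gaussianReal {c : ℝ} (hc : -1 < c) :
    ∫ x, Real.exp (-(c * x ^ 2) / 2) ∂(gaussianReal 0 1) = (1 + c) ^ (-(1 / 2 : ℝ)) := by
  have h1c : 0 < 1 + c := by linarith
  rw [gaussianReal_of_var_ne_zero 0 one_ne_zero, gaussianPDF_def,
    integral_withDensity_eq_integral_toReal_smul (measurable_gaussianPDFReal 0 1).ennreal_ofReal
      (.of_forall fun _ => ENNReal.ofReal_lt_top)]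
  have hdens : ∀ x : ℝ,
      (ENNReal.ofReal (gaussianPDFReal 0 1 x)).toReal • Real.exp (-(c * x ^ 2) / 2)
        = (√(2 * π))⁻¹ * Real.exp (-((1 + c) / 2) * x ^ 2) := by
    intro x
    rw [ENNReal.toReal_ofReal (gaussianPDFReal_nonneg _ _ _), smul_eq_mul, gaussianPDFReal,
      mul_assoc, ← Real.exp_add]
    simp only [NNReal.coe_one, mul_one, sub_zero]
    congr 2
    ring
  simp_rw [hdens]
  rw [integral_const_mul, integral_gaussian,
    show π / ((1 + c) / 2) = 2 * π * (1 + c)⁻¹ by field_simp,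
    Real.sqrt_mul (x := 2 * π) (by positivity), inv_mul_cancel_left₀ (by positivity),
    Real.sqrt_inv, Real.rpow_neg h1c.le, ← Real.sqrt_eq_rpow]

/-- For `y ~ N(0,1)` and `w ~ N(0, φ⁻¹ I_p)` independent, `y • w` follows
`GAL_p(2 φ⁻¹ I_p, 0, 1/2)`. -/
theorem stmt7 {Ω : Type*} [MeasureSpace Ω] [IsProbabilityMeasure (ℙ : Measure Ω)]
    {p : ℕ} (φ : ℝ) (hφ : 0 < φ)
    (y : Ω → ℝ) (w : Ω → EuclideanSpace ℝ (Fin p))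
    (hy : Measurable y) (hw : Measurable w)
    (hylaw : Measure.map y ℙ = gaussianReal 0 1)
    (hwlaw : IsGaussian0 (φ⁻¹ • (1 : Matrix (Fin p) (Fin p) ℝ)) (Measure.map w ℙ))
    (hind : IndepFun y w ℙ) :
    IsGAL ((2 * φ⁻¹) • (1 : Matrix (Fin p) (Fin p) ℝ)) 0 (1/2)
      (Measure.map (fun ω => y ω • w ω) ℙ) := by
  refine ⟨Measure.isProbabilityMeasure_map (hy.smul hw).aemeasurable, fun u => ?_⟩
  have hc : 0 ≤ φ⁻¹ * ‖u‖ ^ 2 := by positivity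
  have hcf_w (a : ℝ) : charFn (Measure.map w ℙ) (a • u)
      = ((Real.exp (-(φ⁻¹ * ‖u‖ ^ 2 * a ^ 2) / 2) : ℝ) : ℂ) := by
    rw [hwlaw.charFn_eq, norm_smul, Real.norm_eq_abs, mul_pow, sq_abs]
    ring_nf
  rw [charFn_map_smul_eq_integral hy hw hind, hylaw]
  simp_rw [hcf_w]
  rw [integral_complex_ofReal, integral_exp_neg_mul_sq_gaussianReal (by linarith),
    galCF_two_mul_smul_one_zero, Complex.ofReal_cpow (by linarith), Complex.ofReal_neg]
end
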